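/- arXiv:1408.1262 — 3 statements merged into one kernel-verified Lean document; each statement's English description precedes it below -/
import Mathlib

section
/- Let V ⊆ ℝ^d be a finite point configuration and let H = {x ∈ ℝ^d : g(x) = 0} be a supporting hyperplane of V, i.e., g is a nonzero affine-linear function that is nonnegative on V and vanishes at some point of V. Then Th(V ∩ H) ≤ Th(V) and Lev(V ∩ H) ≤ Lev(V). In other words, the classes of configurations of Theta rank at most k and of levelness at most k are face-hereditary. -/
open MvPolynomial Set

noncomputable section

/-- `f` is an affine-linear polynomial (degree at most one). -/
def IsAffLin {ι : Type} (f : MvPolynomial ι ℝ) : Prop := f.totalDegree ≤ 1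

/-- `f` is nonnegative on `V`. -/
def NonnegOn {ι : Type} (V : Set (ι → ℝ)) (f : MvPolynomial ι ℝ) : Prop :=
  ∀ v ∈ V, 0 ≤ eval v f

/-- `ℓ` is `k`-sos with respect to `V`: on `V` it agrees with a sum of squares of
polynomials of degree at most `k`. -/
def IsKSos {ι : Type} (V : Set (ι → ℝ)) (k : ℕ) (ℓ : MvPolynomial ι ℝ) : Prop :=
  ∃ (s : ℕ) (h : Fin s → MvPolynomial ι ℝ),
    (∀ i, (h i).totalDegree ≤ k) ∧ ∀ v ∈ V, eval v ℓ = ∑ i, (eval v (h i)) ^ 2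

/-- The Theta rank of a point configuration `V`. -/
def thetaRank {ι : Type} (V : Set (ι → ℝ)) : ℕ :=
  sInf {k | ∀ ℓ, IsAffLin ℓ → NonnegOn V ℓ → IsKSos V k ℓ}

/-- `F` is a face of `V`. -/
def IsFaceOf {ι : Type} (V F : Set (ι → ℝ)) : Prop :=
  ∃ g, IsAffLin g ∧ NonnegOn V g ∧ F = {v ∈ V | eval v g = 0}

/-- `F` is a facet of `V`: an inclusion-maximal proper face. -/
def IsFacetOf {ι : Type} (V F : Set (ι → ℝ)) : Prop :=
  IsFaceOf V F ∧ F ≠ V ∧ ∀ F', IsFaceOf V F' → F' ≠ V → F ⊆ F' → F' = F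

/-- `ℓ` is a facet-defining affine-linear function for `V`. -/
def IsFacetDefining {ι : Type} (V : Set (ι → ℝ)) (ℓ : MvPolynomial ι ℝ) : Prop :=
  IsAffLin ℓ ∧ NonnegOn V ℓ ∧ IsFacetOf V {v ∈ V | eval v ℓ = 0}

/-- The levelness of a point configuration `V`. -/
def levelness {ι : Type} (V : Set (ι → ℝ)) : ℕ :=
  sInf {k | ∀ ℓ, IsFacetDefining V ℓ → ((fun v => eval v ℓ) '' V).ncard ≤ k}

/-!
A function `ℓ` that is nonnegative on the face `F = {g = 0}` of the finite configuration `V`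
becomes nonnegative on all of `V` after adding a large multiple of `g`, without changing it on `F`.
For the Theta rank, a sum-of-squares certificate of `ℓ + t g` on `V` is then one for `ℓ` on `F`.
For the levelness, the same trick shows that a facet `F'` of `F` is a face of `V`, and a maximality
argument produces a facet `G` of `V` with `F ∩ G = F'`. A facet-defining function `h` of `G` is a
nonzero multiple of `ℓ` on `F`, so `ℓ` takes no more values on `F` than `h` takes on `V`.
-/

section

variable {ι : Type}

lemma IsAffLin.add_C_mul {p q : MvPolynomial ι ℝ} (hp : IsAffLin p) (hq : IsAffLin q) (c : ℝ) :
    IsAffLin (p + C c * q) :=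
  (totalDegree_add _ _).trans <| max_le hp <| (totalDegree_mul _ _).trans <| by
    simpa [totalDegree_C, IsAffLin] using hq

lemma IsAffLin.sub_C_mul {p q : MvPolynomial ι ℝ} (hp : IsAffLin p) (hq : IsAffLin q) (c : ℝ) :
    IsAffLin (p - C c * q) := by
  simpa [sub_eq_add_neg] using hp.add_C_mul hq (-c)

lemma exists_isAffLin_eval_eq_one_eval_eq_zero {v w : ι → ℝ} (hvw : v ≠ w) :
    ∃ p : MvPolynomial ι ℝ, IsAffLin p ∧ eval v p = 1 ∧ eval w p = 0 := by
  obtain ⟨i, hi⟩ := Function.ne_iff.mp hvw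
  refine ⟨C (v i - w i)⁻¹ * (X i - C (w i)), ?_, ?_, by simp⟩
  · refine (totalDegree_mul _ _).trans ?_
    simpa [totalDegree_C] using (totalDegree_sub_C_le (X i) (w i)).trans_eq (totalDegree_X i)
  · simp [inv_mul_cancel₀ (sub_ne_zero.mpr hi)]

lemma exists_totalDegree_le_card_indicator (s : Finset (ι → ℝ)) (v : ι → ℝ) :
    ∃ p : MvPolynomial ι ℝ, p.totalDegree ≤ s.card ∧ eval v p = 1 ∧
      ∀ w ∈ s, w ≠ v → eval w p = 0 := by
  classical
  induction s using Finset.induction_on with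
  | empty => exact ⟨1, by simp, by simp, by simp⟩
  | insert a s ha ih =>
    obtain ⟨p, hp, hpv, hps⟩ := ih
    rw [Finset.card_insert_of_notMem ha]
    by_cases hav : a = v
    · refine ⟨p, hp.trans (Nat.le_succ _), hpv, fun w hw hwv => ?_⟩
      rcases Finset.mem_insert.mp hw with rfl | hw
      · exact absurd hav hwv
      · exact hps w hw hwv
    · obtain ⟨q, hq, hqv, hqa⟩ := exists_isAffLin_eval_eq_one_eval_eq_zero (Ne.symm hav)
      refine ⟨p * q, (totalDegree_mul _ _).trans (add_le_add hp hq), by simp [hpv, hqv],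
        fun w hw hwv => ?_⟩
      rcases Finset.mem_insert.mp hw with rfl | hw
      · simp [hqa]
      · simp [hps w hw hwv]

lemma exists_uniform_interpolation {V : Set (ι → ℝ)} (hV : V.Finite) :
    ∃ k : ℕ, ∀ f : (ι → ℝ) → ℝ, ∃ p : MvPolynomial ι ℝ,
      p.totalDegree ≤ k ∧ ∀ v ∈ V, eval v p = f v := by
  classical
  choose δ hδ hδv hδw using exists_totalDegree_le_card_indicator hV.toFinset
  refine ⟨hV.toFinset.card, fun f =>
    ⟨∑ v ∈ hV.toFinset, C (f v) * δ v, ?_, fun u hu => ?_⟩⟩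
  · refine (totalDegree_finsetSum _ _).trans (Finset.sup_le fun v _ => ?_)
    exact (totalDegree_mul _ _).trans (by simpa [totalDegree_C] using hδ v)
  · have hu' : u ∈ hV.toFinset := hV.mem_toFinset.mpr hu
    rw [map_sum, Finset.sum_eq_single u (fun v _ hvu => by simp [hδw v u hu' hvu.symm])
      (fun h => absurd hu' h)]
    simp [hδv]

lemma isKSos_thetaRank {V : Set (ι → ℝ)} (hV : V.Finite) {ℓ : MvPolynomial ι ℝ}
    (hℓ : IsAffLin ℓ) (hℓV : NonnegOn V ℓ) : IsKSos V (thetaRank V) ℓ := by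
  obtain ⟨k, hk⟩ := exists_uniform_interpolation hV
  refine Nat.sInf_mem (s := {k | ∀ ℓ, IsAffLin ℓ → NonnegOn V ℓ → IsKSos V k ℓ})
    ⟨k, fun ℓ _ hℓV => ?_⟩ ℓ hℓ hℓV
  obtain ⟨p, hpk, hp⟩ := hk fun v => √(eval v ℓ)
  exact ⟨1, fun _ => p, fun _ => hpk, fun v hv => by simp [hp v hv, Real.sq_sqrt (hℓV v hv)]⟩

lemma ncard_image_le_levelness {V : Set (ι → ℝ)} (hV : V.Finite) {ℓ : MvPolynomial ι ℝ}
    (hℓ : IsFacetDefining V ℓ) : ((fun v => eval v ℓ) '' V).ncard ≤ levelness V :=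
  Nat.sInf_mem
    (s := {k | ∀ ℓ, IsFacetDefining V ℓ → ((fun v => eval v ℓ) '' V).ncard ≤ k})
    ⟨V.ncard, fun _ _ => ncard_image_le hV⟩ ℓ hℓ

lemma IsFaceOf.subset {V F : Set (ι → ℝ)} (hF : IsFaceOf V F) : F ⊆ V := by
  obtain ⟨g, -, -, rfl⟩ := hF
  exact sep_subset _ _

lemma IsFaceOf.inter_of_subset {V F G : Set (ι → ℝ)} (hG : IsFaceOf V G) (hFV : F ⊆ V) :
    IsFaceOf F (F ∩ G) := by
  obtain ⟨g, hg, hgV, rfl⟩ := hG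
  refine ⟨g, hg, fun v hv => hgV v (hFV hv), ?_⟩
  ext v
  simp only [mem_inter_iff, mem_ofPred_eq]
  exact ⟨fun ⟨hv, _, hgv⟩ => ⟨hv, hgv⟩, fun ⟨hv, hgv⟩ => ⟨hv, hFV hv, hgv⟩⟩

lemma exists_add_C_mul_pos {V : Set (ι → ℝ)} (hV : V.Finite) (ℓ g : MvPolynomial ι ℝ) :
    ∃ t : ℝ, ∀ v ∈ V, 0 < eval v g → 0 < eval v (ℓ + C t * g) := by
  obtain ⟨T, hT⟩ := (hV.image fun v => -eval v ℓ / eval v g).bddAbove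
  refine ⟨T + 1, fun v hv hgv => ?_⟩
  have : -eval v ℓ < (T + 1) * eval v g :=
    (div_lt_iff₀ hgv).mp ((hT ⟨v, hv, rfl⟩).trans_lt (lt_add_one T))
  simp only [map_add, map_mul, eval_C]
  linarith

lemma exists_extension_of_nonnegOn_zeroSet {V : Set (ι → ℝ)} (hV : V.Finite)
    {g ℓ : MvPolynomial ι ℝ} (hg : IsAffLin g) (hgV : NonnegOn V g) (hℓ : IsAffLin ℓ)
    (hℓF : NonnegOn {v ∈ V | eval v g = 0} ℓ) :
    ∃ L : MvPolynomial ι ℝ, IsAffLin L ∧ NonnegOn V L ∧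
      (∀ v ∈ V, eval v g = 0 → eval v L = eval v ℓ) ∧
      {v ∈ V | eval v L = 0} = {v ∈ {v ∈ V | eval v g = 0} | eval v ℓ = 0} := by
  obtain ⟨t, ht⟩ := exists_add_C_mul_pos hV ℓ g
  have hL : ∀ v ∈ V, eval v g = 0 → eval v (ℓ + C t * g) = eval v ℓ := fun v _ hgv => by
    simp [hgv]
  refine ⟨ℓ + C t * g, hℓ.add_C_mul hg t, fun v hv => ?_, hL, ?_⟩
  · rcases (hgV v hv).eq_or_lt with hgv | hgv
    · exact (hL v hv hgv.symm).symm ▸ hℓF v ⟨hv, hgv.symm⟩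
    · exact (ht v hv hgv).le
  · ext v
    simp only [mem_ofPred_eq]
    refine ⟨fun ⟨hv, hLv⟩ => ?_,
      fun ⟨⟨hv, hgv⟩, hℓv⟩ => ⟨hv, (hL v hv hgv).trans hℓv⟩⟩
    have hgv : eval v g = 0 :=
      ((hgV v hv).eq_or_lt.resolve_right fun hgv => (ht v hv hgv).ne' hLv).symm
    exact ⟨⟨hv, hgv⟩, (hL v hv hgv).symm.trans hLv⟩

lemma IsFaceOf.trans {V F F' : Set (ι → ℝ)} (hV : V.Finite) (hF : IsFaceOf V F)
    (hF' : IsFaceOf F F') : IsFaceOf V F' := by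
  obtain ⟨g, hg, hgV, rfl⟩ := hF
  obtain ⟨ℓ, hℓ, hℓF, rfl⟩ := hF'
  obtain ⟨L, hL, hLV, -, hLzero⟩ := exists_extension_of_nonnegOn_zeroSet hV hg hgV hℓ hℓF
  exact ⟨L, hL, hLV, hLzero.symm⟩

lemma thetaRank_le_of_isFaceOf {V F : Set (ι → ℝ)} (hV : V.Finite) (hF : IsFaceOf V F) :
    thetaRank F ≤ thetaRank V := by
  obtain ⟨g, hg, hgV, rfl⟩ := hF
  refine Nat.sInf_le fun ℓ hℓ hℓF => ?_
  obtain ⟨L, hL, hLV, hLℓ, -⟩ := exists_extension_of_nonnegOn_zeroSet hV hg hgV hℓ hℓF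
  obtain ⟨s, p, hp, hLp⟩ := isKSos_thetaRank hV hL hLV
  exact ⟨s, p, hp, fun v hv => (hLℓ v hv.1 hv.2).symm.trans (hLp v hv.1)⟩

lemma NonnegOn.exists_pos_of_zeroSet_ne {V : Set (ι → ℝ)} {p : MvPolynomial ι ℝ}
    (hpV : NonnegOn V p) (hne : {v ∈ V | eval v p = 0} ≠ V) : ∃ w ∈ V, 0 < eval w p := by
  by_contra! hle
  exact hne (subset_antisymm (sep_subset _ _) fun v hv => ⟨hv, (hle v hv).antisymm (hpV v hv)⟩)

/-- Rotating `h` about the zero set of `p` until it hits a further point of `V`. -/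
lemma exists_sub_C_mul_nonnegOn {V : Set (ι → ℝ)} (hV : V.Finite) {h p : MvPolynomial ι ℝ}
    (hhV : NonnegOn V h) (hpV : NonnegOn V p) (hpos : ∃ w ∈ V, 0 < eval w p) :
    ∃ c : ℝ, NonnegOn V (h - C c * p) ∧
      ∃ w ∈ V, 0 < eval w p ∧ eval w (h - C c * p) = 0 := by
  obtain ⟨w, ⟨hwV, hw⟩, hmin⟩ := exists_min_image {v ∈ V | 0 < eval v p}
    (fun v => eval v h / eval v p) (hV.subset (sep_subset _ _)) hpos
  refine ⟨eval w h / eval w p, fun v hv => ?_, w, hwV, hw, by simp [div_mul_cancel₀ _ hw.ne']⟩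
  simp only [map_sub, map_mul, eval_C, sub_nonneg]
  rcases (hpV v hv).eq_or_lt with hpv | hpv
  · simpa [← hpv] using hhV v hv
  · exact (le_div_iff₀ hpv).mp (hmin v ⟨hv, hpv⟩)

lemma IsFaceOf.exists_ssuperset_inter_eq {V G G₂ : Set (ι → ℝ)} (hV : V.Finite)
    (hG : IsFaceOf V G) (hG₂ : IsFaceOf V G₂) (hG₂V : G₂ ≠ V) (hGG₂ : G ⊂ G₂) :
    ∃ G₃, IsFaceOf V G₃ ∧ G₃ ≠ V ∧ G ⊂ G₃ ∧ G₂ ∩ G₃ = G := by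
  obtain ⟨h, hh, hhV, rfl⟩ := hG
  obtain ⟨p, hp, hpV, rfl⟩ := hG₂
  obtain ⟨c, hq, w, hwV, hw, hwq⟩ :=
    exists_sub_C_mul_nonnegOn hV hhV hpV (hpV.exists_pos_of_zeroSet_ne hG₂V)
  have hqp : ∀ v, eval v p = 0 → eval v (h - C c * p) = eval v h := fun v hpv => by simp [hpv]
  obtain ⟨u, ⟨huV, hup⟩, hu⟩ := exists_of_ssubset hGG₂
  refine ⟨{v ∈ V | eval v (h - C c * p) = 0}, ⟨_, hh.sub_C_mul hp c, hq, rfl⟩, ?_, ?_, ?_⟩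
  · intro hEq
    exact hu ⟨huV, (hqp u hup).symm.trans ((Set.ext_iff.mp hEq u).mpr huV).2⟩
  · refine ⟨fun v ⟨hv, hhv⟩ => ⟨hv, ?_⟩, fun hsub => ?_⟩
    · rw [hqp v (hGG₂.1 ⟨hv, hhv⟩).2, hhv]
    · exact hw.ne' (hGG₂.1 (hsub ⟨hwV, hwq⟩)).2
  · ext v
    simp only [mem_inter_iff, mem_ofPred_eq]
    exact ⟨fun ⟨⟨hv, hpv⟩, _, hqv⟩ => ⟨hv, (hqp v hpv).symm.trans hqv⟩,
      fun hvG => ⟨hGG₂.1 hvG, hvG.1, (hqp v (hGG₂.1 hvG).2).trans hvG.2⟩⟩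

lemma IsFacetOf.exists_facet_inter_eq {V F F' : Set (ι → ℝ)} (hV : V.Finite) (hFV : F ⊆ V)
    (hF' : IsFacetOf F F') (hF'V : IsFaceOf V F') : ∃ G, IsFacetOf V G ∧ F ∩ G = F' := by
  obtain ⟨hF'face, hF'F, hmax⟩ := hF'
  have hF'sub : F' ⊆ F := hF'face.subset
  set 𝒯 := {G | IsFaceOf V G ∧ G ≠ V ∧ F ∩ G = F'}
  have h𝒯 : 𝒯.Finite := hV.finite_subsets.subset fun G hG => hG.1.subset
  have hF'𝒯 : F' ∈ 𝒯 :=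
    ⟨hF'V, fun h => hF'F (hF'sub.antisymm (h ▸ hFV)), inter_eq_right.mpr hF'sub⟩
  obtain ⟨G, hG⟩ := h𝒯.exists_maximal ⟨F', hF'𝒯⟩
  obtain ⟨hGface, hGV, hGF⟩ := hG.prop
  refine ⟨G, ⟨hGface, hGV, fun G₂ hG₂ hG₂V hGG₂ => ?_⟩, hGF⟩
  by_contra hne
  have hss : G ⊂ G₂ := hGG₂.ssubset_of_ne (Ne.symm hne)
  -- `F ∩ G₂` is a face of `F` containing the facet `F'`, so it is `F` or `F'`.
  rcases eq_or_ne (F ∩ G₂) F with hFG₂ | hFG₂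
  · obtain ⟨G₃, hG₃, hG₃V, hGG₃, hG₂G₃⟩ :=
      hGface.exists_ssuperset_inter_eq hV hG₂ hG₂V hss
    have hFG₃ : F ∩ G₃ = F' := by rw [← hFG₂, inter_assoc, hG₂G₃, hGF]
    exact hG.not_prop_of_ssuperset hGG₃ ⟨hG₃, hG₃V, hFG₃⟩
  · have hFG₂ : F ∩ G₂ = F' :=
      hmax _ (hG₂.inter_of_subset hFV) hFG₂ (hGF ▸ inter_subset_inter_right F hGG₂)
    exact hG.not_prop_of_ssuperset hss ⟨hG₂, hG₂V, hFG₂⟩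

lemma IsFacetDefining.exists_eq_mul {F : Set (ι → ℝ)} (hF : F.Finite)
    {ℓ h : MvPolynomial ι ℝ} (hℓ : IsFacetDefining F ℓ) (hh : IsAffLin h)
    (hhF : NonnegOn F h) (hzero : ∀ v ∈ F, eval v ℓ = 0 → eval v h = 0) :
    ∃ c : ℝ, ∀ v ∈ F, eval v h = c * eval v ℓ := by
  obtain ⟨hℓa, hℓF, -, hne, hmax⟩ := hℓ
  obtain ⟨c, hq, w, hwF, hw, hwq⟩ :=
    exists_sub_C_mul_nonnegOn hF hhF hℓF (hℓF.exists_pos_of_zeroSet_ne hne)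
  set Z := {v ∈ F | eval v (h - C c * ℓ) = 0}
  have hZ : Z = F := by
    by_contra hZF
    have hZℓ := hmax Z ⟨_, hh.sub_C_mul hℓa c, hq, rfl⟩ hZF
      fun v ⟨hv, hℓv⟩ => ⟨hv, by simp [hℓv, hzero v hv hℓv]⟩
    exact hw.ne' ((Set.ext_iff.mp hZℓ w).mp ⟨hwF, hwq⟩).2
  refine ⟨c, fun v hv => ?_⟩
  have hqv : eval v (h - C c * ℓ) = 0 := (hZ.symm ▸ hv : v ∈ Z).2
  simpa [sub_eq_zero] using hqv

lemma levelness_le_of_isFaceOf {V F : Set (ι → ℝ)} (hV : V.Finite) (hF : IsFaceOf V F) :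
    levelness F ≤ levelness V := by
  have hFV := hF.subset
  have hFfin := hV.subset hFV
  refine Nat.sInf_le fun ℓ hℓ => ?_
  obtain ⟨G, hG, hGF⟩ := hℓ.2.2.exists_facet_inter_eq hV hFV (hF.trans hV hℓ.2.2.1)
  obtain ⟨h, hh, hhV, rfl⟩ := hG.1
  have hzero_iff : ∀ v ∈ F, eval v h = 0 ↔ eval v ℓ = 0 := fun v hv => by
    simpa [hv, hFV hv] using congrArg (v ∈ ·) hGF
  obtain ⟨c, hc⟩ := hℓ.exists_eq_mul hFfin hh (fun v hv => hhV v (hFV hv))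
    fun v hv => (hzero_iff v hv).2
  have hc0 : c ≠ 0 := by
    rintro rfl
    exact hℓ.2.2.2.1 (subset_antisymm (sep_subset _ _)
      fun v hv => ⟨hv, (hzero_iff v hv).1 (by simp [hc v hv])⟩)
  calc ((fun v => eval v ℓ) '' F).ncard
      = ((· / c) '' ((fun v => eval v h) '' F)).ncard := by
        rw [image_image]
        exact congrArg ncard (image_congr fun v hv => by simp [hc v hv, hc0])
    _ ≤ ((fun v => eval v h) '' F).ncard := ncard_image_le (hFfin.image _)
    _ ≤ ((fun v => eval v h) '' V).ncard := ncard_le_ncard (image_mono hFV) (hV.image _)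
    _ ≤ levelness V := ncard_image_le_levelness hV ⟨hh, hhV, hG⟩

end

theorem theta_levelness_face_hereditary_general {d : ℕ} (V : Set (Fin d → ℝ)) (hVfin : V.Finite)
    (g : MvPolynomial (Fin d) ℝ) (hg : IsAffLin g)
    (hgV : NonnegOn V g) :
    thetaRank {v ∈ V | eval v g = 0} ≤ thetaRank V ∧
      levelness {v ∈ V | eval v g = 0} ≤ levelness V := by
  have hF : IsFaceOf V {v ∈ V | eval v g = 0} := ⟨g, hg, hgV, rfl⟩
  exact ⟨thetaRank_le_of_isFaceOf hVfin hF, levelness_le_of_isFaceOf hVfin hF⟩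

/-- If `H = {x : g x = 0}` is a supporting hyperplane of the finite point
configuration `V` (so `g` is a nonzero affine-linear function, nonnegative on `V`, vanishing
at some point of `V`), then `Th(V ∩ H) ≤ Th(V)` and `Lev(V ∩ H) ≤ Lev(V)`:
Theta rank and levelness are face-hereditary. -/
theorem theta_levelness_face_hereditary {d : ℕ} (V : Set (Fin d → ℝ)) (hVfin : V.Finite)
    (g : MvPolynomial (Fin d) ℝ) (hg : IsAffLin g) (hg0 : g ≠ 0)
    (hgV : NonnegOn V g) (hsupp : ∃ v ∈ V, eval v g = 0) :
    thetaRank {v ∈ V | eval v g = 0} ≤ thetaRank V ∧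
      levelness {v ∈ V | eval v g = 0} ≤ levelness V :=
  theta_levelness_face_hereditary_general V hVfin g hg hgV
end
end

section
/- Let M = (E, 𝓑) be a matroid. If rk(M) ≤ 2 or |E| ≤ 5, then M is 2-level, i.e., Lev(V_M) ≤ 2. -/
open MvPolynomial Set

noncomputable section

/-- The base configuration of a matroid: the 0/1 indicator vectors of its bases. -/
def baseConfig {α : Type} (M : Matroid α) : Set (α → ℝ) :=
  {x | ∃ B, M.IsBase B ∧ x = Set.indicator B 1}

/-!
If a facet-defining `ℓ` of a 0/1 configuration `V` takes three values, then every coordinate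
that equals `1` somewhere on `V` equals `1` somewhere on the facet: otherwise, with `t` the
least value of `ℓ` on `{xᵢ = 1}`, the function `ℓ - t xᵢ` would cut out a strictly larger
proper face. For a matroid of rank two, writing `ℓ(χ_{e,f}) = c + a e + a f`, this forces
`a e = a f` on every base `{e, f}` where `ℓ` is positive, and basis exchange then shows that
all positive values of `ℓ` coincide, so `ℓ` takes only two values after all; rank at most one
is immediate. If `|E| ≤ 5` and the rank is at least three, the dual has rank at most two, and
the reflection `x ↦ χ_E - x` maps `V_{M*}` onto `V_M`, carrying facets to facets and
preserving the values of the transported facet-defining functions.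
-/

theorem Finsupp.eq_zero_or_eq_single_of_degree_le_one {ι : Type} {d : ι →₀ ℕ}
    (hd : d.degree ≤ 1) : d = 0 ∨ ∃ i, d = Finsupp.single i 1 := by
  obtain rfl | ⟨i, hi⟩ := eq_or_ne d 0 |>.imp_right Finsupp.ne_iff.mp
  · exact .inl rfl
  have hdi : d i = 1 := le_antisymm ((d.le_degree i).trans hd) (Nat.one_le_iff_ne_zero.mpr hi)
  have hle : Finsupp.single i 1 ≤ d := by
    classical
    intro j
    by_cases hj : i = j <;> simp [hj, ← hdi]
  obtain ⟨r, rfl⟩ := exists_add_of_le hle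
  have hr : r.degree = 0 := by simpa using hd
  exact .inr ⟨i, by simp [(Finsupp.degree_eq_zero_iff r).mp hr]⟩

theorem IsAffLin.eval_eq {ι : Type} [Fintype ι] {ℓ : MvPolynomial ι ℝ} (hℓ : IsAffLin ℓ)
    (x : ι → ℝ) : eval x ℓ = ℓ.coeff 0 + ∑ i, ℓ.coeff (Finsupp.single i 1) * x i := by
  classical
  have hsupp : ℓ.support ⊆ insert 0 (Finset.univ.image fun i => Finsupp.single i 1) := by
    intro d hd
    rcases Finsupp.eq_zero_or_eq_single_of_degree_le_one ((le_totalDegree hd).trans hℓ)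
      with rfl | ⟨i, rfl⟩ <;> simp
  rw [eval_eq', Finset.sum_subset hsupp (fun d _ hd => by simp [notMem_support_iff.mp hd]),
    Finset.sum_insert (by simp),
    Finset.sum_image fun i _ j _ h => Finsupp.single_left_injective one_ne_zero h]
  simp [Finsupp.single_apply, pow_ite]

section Reflection

variable {ι : Type} (w : ι → ℝ)

/-- For affine-linear `ℓ`, this is `ℓ` composed with the point reflection `x ↦ w - x`. -/
def reflectPoly (ℓ : MvPolynomial ι ℝ) : MvPolynomial ι ℝ := C (eval w ℓ + ℓ.coeff 0) - ℓ

variable {w}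

theorem isAffLin_reflectPoly {ℓ : MvPolynomial ι ℝ} (hℓ : IsAffLin ℓ) :
    IsAffLin (reflectPoly w ℓ) :=
  (totalDegree_sub _ _).trans (max_le ((totalDegree_C _).trans_le zero_le_one) hℓ)

theorem IsAffLin.eval_reflectPoly [Fintype ι] {ℓ : MvPolynomial ι ℝ} (hℓ : IsAffLin ℓ)
    (x : ι → ℝ) :
    eval x (reflectPoly w ℓ) = eval (w - x) ℓ := by
  simp only [reflectPoly, map_sub, eval_C, hℓ.eval_eq, Pi.sub_apply, mul_sub,
    Finset.sum_sub_distrib]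
  ring

variable [Fintype ι] {V F : Set (ι → ℝ)}

theorem sep_preimage_sub_eval_reflectPoly {g : MvPolynomial ι ℝ} (hg : IsAffLin g) :
    {x ∈ (w - ·) ⁻¹' V | eval x (reflectPoly w g) = 0}
      = (w - ·) ⁻¹' {v ∈ V | eval v g = 0} := by
  ext x
  simp [hg.eval_reflectPoly]

theorem NonnegOn.preimage_sub {g : MvPolynomial ι ℝ} (hg : IsAffLin g) (hnn : NonnegOn V g) :
    NonnegOn ((w - ·) ⁻¹' V) (reflectPoly w g) := fun x hx => by
  rw [hg.eval_reflectPoly]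
  exact hnn _ hx

theorem IsFaceOf.preimage_sub (hF : IsFaceOf V F) :
    IsFaceOf ((w - ·) ⁻¹' V) ((w - ·) ⁻¹' F) := by
  obtain ⟨g, hg, hnn, rfl⟩ := hF
  exact ⟨reflectPoly w g, isAffLin_reflectPoly hg, hnn.preimage_sub hg,
    (sep_preimage_sub_eval_reflectPoly hg).symm⟩

theorem IsFacetOf.preimage_sub (hF : IsFacetOf V F) :
    IsFacetOf ((w - ·) ⁻¹' V) ((w - ·) ⁻¹' F) := by
  obtain ⟨hface, hne, hmax⟩ := hF
  have hinv := (const_sub_involutive w).preimage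
  refine ⟨hface.preimage_sub, hinv.injective.ne hne, fun G hG hGne hFG => ?_⟩
  have := hmax _ (hinv V ▸ hG.preimage_sub) (hinv V ▸ hinv.injective.ne hGne)
    (hinv F ▸ Set.preimage_mono hFG)
  rw [← this, hinv]

theorem IsFacetDefining.preimage_sub {ℓ : MvPolynomial ι ℝ} (hℓ : IsFacetDefining V ℓ) :
    IsFacetDefining ((w - ·) ⁻¹' V) (reflectPoly w ℓ) := by
  obtain ⟨haff, hnn, hfacet⟩ := hℓ
  refine ⟨isAffLin_reflectPoly haff, hnn.preimage_sub haff, ?_⟩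
  rw [sep_preimage_sub_eval_reflectPoly haff]
  exact hfacet.preimage_sub

theorem image_eval_reflectPoly_preimage_sub {ℓ : MvPolynomial ι ℝ} (hℓ : IsAffLin ℓ) :
    (fun x => eval x (reflectPoly w ℓ)) '' ((w - ·) ⁻¹' V) = (fun v => eval v ℓ) '' V := by
  rw [← (const_sub_involutive w).image_eq_preimage_symm, Set.image_image]
  simp [hℓ.eval_reflectPoly]

end Reflection

section Levelness

variable {ι : Type} {V : Set (ι → ℝ)} {k : ℕ}

def IsKLevel (V : Set (ι → ℝ)) (k : ℕ) : Prop :=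
  ∀ ℓ, IsFacetDefining V ℓ → ((fun v => eval v ℓ) '' V).ncard ≤ k

theorem IsKLevel.levelness_le (h : IsKLevel V k) : levelness V ≤ k := Nat.sInf_le h

theorem IsKLevel.preimage_sub [Fintype ι] (h : IsKLevel V k) (w : ι → ℝ) :
    IsKLevel ((w - ·) ⁻¹' V) k := by
  intro ℓ hℓ
  have hinv := (const_sub_involutive w).preimage V
  rw [← image_eval_reflectPoly_preimage_sub hℓ.1, hinv]
  exact h _ (hinv ▸ hℓ.preimage_sub)

end Levelness

theorem Set.ncard_le_two_of_subset_pair {β : Type} {S : Set β} {x y : β} (h : S ⊆ {x, y}) :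
    S.ncard ≤ 2 :=
  (ncard_le_ncard h (toFinite _)).trans ((ncard_insert_le _ _).trans (by simp))

theorem Set.ncard_le_two_of_pos_eq {S : Set ℝ} (hnn : ∀ x ∈ S, 0 ≤ x)
    (heq : ∀ x ∈ S, ∀ y ∈ S, 0 < x → 0 < y → x = y) : S.ncard ≤ 2 := by
  obtain ⟨u, hu⟩ : ∃ u, S ⊆ {0, u} := by
    by_cases h : ∃ u ∈ S, 0 < u
    · obtain ⟨u, huS, hu⟩ := h
      exact ⟨u, fun x hx => (hnn x hx).eq_or_lt.imp Eq.symm (heq x hx u huS · hu)⟩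
    · push Not at h
      exact ⟨0, fun x hx => .inl (le_antisymm (h x hx) (hnn x hx))⟩
  exact ncard_le_two_of_subset_pair hu

section ZeroOne

variable {ι : Type} {V : Set (ι → ℝ)} {ℓ : MvPolynomial ι ℝ}

theorem IsFacetDefining.eq_or_eq_of_subset (hℓ : IsFacetDefining V ℓ) {g : MvPolynomial ι ℝ}
    (hg : IsAffLin g) (hgnn : NonnegOn V g)
    (hsub : {v ∈ V | eval v ℓ = 0} ⊆ {v ∈ V | eval v g = 0}) :
    {v ∈ V | eval v g = 0} = V ∨ {v ∈ V | eval v g = 0} = {v ∈ V | eval v ℓ = 0} :=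
  or_iff_not_imp_left.mpr fun hne => hℓ.2.2.2.2 _ ⟨g, hg, hgnn, rfl⟩ hne hsub

theorem IsFacetDefining.exists_eval_eq_zero_of_apply_eq_one (hV : V.Finite)
    (h01 : ∀ v ∈ V, ∀ i, v i = 0 ∨ v i = 1) (hℓ : IsFacetDefining V ℓ)
    (hvals : 2 < ((fun v => eval v ℓ) '' V).ncard) {v : ι → ℝ} {i : ι} (hv : v ∈ V)
    (hvi : v i = 1) : ∃ z ∈ V, z i = 1 ∧ eval z ℓ = 0 := by
  by_contra! hpos
  obtain ⟨z₀, ⟨hz₀, hz₀i⟩, hmin⟩ :=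
    Set.exists_min_image {z ∈ V | z i = 1} (fun z => eval z ℓ) (hV.sep _) ⟨v, hv, hvi⟩
  set t := eval z₀ ℓ
  let g := ℓ - C t * X i
  have hg_eval (z : ι → ℝ) : eval z g = eval z ℓ - t * z i := by simp [g]
  have hg : IsAffLin g := (totalDegree_sub _ _).trans <| max_le hℓ.1 <|
    (totalDegree_mul _ _).trans (by simp [totalDegree_X])
  have hgnn : NonnegOn V g := fun z hz => by
    rcases h01 z hz i with h | h
    · simpa [hg_eval, h] using hℓ.2.1 z hz
    · simpa [hg_eval, h] using hmin z ⟨hz, h⟩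
  have hsub : {v ∈ V | eval v ℓ = 0} ⊆ {v ∈ V | eval v g = 0} := fun z ⟨hz, hz0⟩ => by
    rcases h01 z hz i with h | h
    · exact ⟨hz, by simp [hg_eval, h, hz0]⟩
    · exact absurd hz0 (hpos z hz h)
  rcases hℓ.eq_or_eq_of_subset hg hgnn hsub with hall | hF
  · refine hvals.not_ge (Set.ncard_le_two_of_subset_pair (x := 0) (y := t) ?_)
    rintro _ ⟨z, hz, rfl⟩
    have hzg : z ∈ {v ∈ V | eval v g = 0} := by rwa [hall]
    have hzℓ : eval z ℓ = t * z i := sub_eq_zero.mp ((hg_eval z).symm.trans hzg.2)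
    rcases h01 z hz i with h | h <;> simp [hzℓ, h]
  · have hz₀g : z₀ ∈ {v ∈ V | eval v g = 0} := ⟨hz₀, by simp [hg_eval, hz₀i, t]⟩
    exact hpos z₀ hz₀ hz₀i (hF ▸ hz₀g).2

end ZeroOne

theorem Set.exists_eq_pair_of_mem_of_ncard_eq_two {β : Type} {S : Set β} {x : β}
    (h : S.ncard = 2) (hx : x ∈ S) : ∃ y, x ≠ y ∧ S = {x, y} := by
  obtain ⟨p, q, hpq, rfl⟩ := ncard_eq_two.mp h
  rcases hx with rfl | rfl
  · exact ⟨q, hpq, rfl⟩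
  · exact ⟨p, hpq.symm, pair_comm _ _⟩

theorem IsAffLin.eval_indicator_pair {α : Type} [Fintype α] {ℓ : MvPolynomial α ℝ}
    (hℓ : IsAffLin ℓ) {x y : α} (hxy : x ≠ y) :
    eval (({x, y} : Set α).indicator 1) ℓ
      = ℓ.coeff 0 + ℓ.coeff (Finsupp.single x 1) + ℓ.coeff (Finsupp.single y 1) := by
  rw [hℓ.eval_eq, add_assoc, Finset.sum_eq_add x y hxy (fun z _ hz => by simp [hz.1, hz.2])
    (by simp) (by simp)]
  simp

namespace Matroid

variable {α : Type} {M : Matroid α} {B B' : Set α}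

theorem IsBase.exists_isBase_pair {x y : α} (hB : M.IsBase {x, y}) (hB' : M.IsBase B)
    (hxy : x ≠ y) (hx : x ∉ B) : ∃ z ∈ B, z ≠ y ∧ M.IsBase {z, y} := by
  obtain ⟨z, ⟨hzB, hz⟩, hzB'⟩ := hB.exchange hB' ⟨mem_insert x {y}, hx⟩
  rw [pair_sdiff_left hxy] at hzB'
  exact ⟨z, hzB, fun h => hz (h ▸ mem_insert_of_mem x rfl), hzB'⟩

theorem IsBase.ncard_add_ncard_of_isBase_dual [Finite α] (hB : M.IsBase B)
    (hB' : M✶.IsBase B') : B.ncard + B'.ncard = M.E.ncard := by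
  obtain ⟨hcompl, hB'E⟩ := dual_isBase_iff'.mp hB'
  rw [hB.ncard_eq_ncard_of_isBase hcompl, ncard_sdiff_add_ncard_of_subset hB'E]

theorem baseConfig_dual (M : Matroid α) :
    baseConfig M✶ = (M.E.indicator 1 - ·) ⁻¹' baseConfig M := by
  ext x
  simp only [baseConfig, mem_preimage, mem_ofPred_eq]
  constructor
  · rintro ⟨B, hB, rfl⟩
    obtain ⟨hcompl, hBE⟩ := dual_isBase_iff'.mp hB
    exact ⟨M.E \ B, hcompl, (indicator_sdiff hBE 1).symm⟩
  · rintro ⟨B, hB, hx⟩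
    refine ⟨M.E \ B, hB.compl_isBase_dual, ?_⟩
    rw [indicator_sdiff hB.subset_ground, ← hx, sub_sub_cancel]

theorem baseConfig_finite [Finite α] (M : Matroid α) : (baseConfig M).Finite :=
  (finite_range fun B : Set α => B.indicator (1 : α → ℝ)).subset
    fun _ ⟨B, _, hx⟩ => ⟨B, hx.symm⟩

theorem apply_eq_zero_or_one_of_mem_baseConfig {v : α → ℝ} (hv : v ∈ baseConfig M) (e : α) :
    v e = 0 ∨ v e = 1 := by
  obtain ⟨B, -, rfl⟩ := hv
  by_cases he : e ∈ B <;> simp [he]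

theorem exists_isBase_mem_eval_eq_zero [Finite α] {ℓ : MvPolynomial α ℝ}
    (hℓ : IsFacetDefining (baseConfig M) ℓ)
    (hvals : 2 < ((fun v => eval v ℓ) '' baseConfig M).ncard) {e : α} (hB : M.IsBase B)
    (he : e ∈ B) : ∃ Z, M.IsBase Z ∧ e ∈ Z ∧ eval (Z.indicator 1) ℓ = 0 := by
  obtain ⟨_, ⟨Z, hZ, rfl⟩, hZe, hZ0⟩ := hℓ.exists_eval_eq_zero_of_apply_eq_one
    M.baseConfig_finite (fun _ hv => apply_eq_zero_or_one_of_mem_baseConfig hv) hvals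
    ⟨B, hB, rfl⟩ (i := e) (by simp [he])
  refine ⟨Z, hZ, ?_, hZ0⟩
  by_contra h
  simp [h] at hZe

section PairWeights

variable {c : ℝ} {a : α → ℝ} {e e' f f' g h : α}

theorem le_of_isBase_pair_eq_zero (hnn : ∀ x y, x ≠ y → M.IsBase {x, y} → 0 ≤ c + a x + a y)
    (he : M.IsBase {e, e'}) (hee' : e ≠ e') (hze : c + a e + a e' = 0)
    (hf : M.IsBase {f, f'}) (hzf : c + a f + a f' = 0) (hpos : 0 < c + a e + a f) :
    a e ≤ a f := by
  by_cases hmem : e ∈ ({f, f'} : Set α)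
  · rcases hmem with rfl | rfl
    · exact le_rfl
    · linarith
  obtain ⟨z, hz, hze', hzB⟩ := he.exists_isBase_pair hf hee' hmem
  have := hnn z e' hze' hzB
  -- `z = f'` is impossible: then `0 ≤ c + a f' + a e' = -(c + a e + a f)`
  rcases hz with rfl | rfl <;> linarith

theorem eq_of_isBase_pair_pos (hnn : ∀ x y, x ≠ y → M.IsBase {x, y} → 0 ≤ c + a x + a y)
    (hzero : ∀ x y, M.IsBase {x, y} → ∃ x', x ≠ x' ∧ M.IsBase {x, x'} ∧ c + a x + a x' = 0)
    (hB : M.IsBase {e, f}) (hpos : 0 < c + a e + a f) : a e = a f := by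
  obtain ⟨e', hee', he, hze⟩ := hzero e f hB
  obtain ⟨f', hff', hf, hzf⟩ := hzero f e (pair_comm e f ▸ hB)
  exact le_antisymm (le_of_isBase_pair_eq_zero hnn he hee' hze hf hzf hpos)
    (le_of_isBase_pair_eq_zero hnn hf hff' hzf he hze (by linarith))

theorem eq_of_isBase_pair_pos_of_isBase_pair_pos
    (hnn : ∀ x y, x ≠ y → M.IsBase {x, y} → 0 ≤ c + a x + a y)
    (hzero : ∀ x y, M.IsBase {x, y} → ∃ x', x ≠ x' ∧ M.IsBase {x, x'} ∧ c + a x + a x' = 0)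
    (hB₁ : M.IsBase {e, f}) (hpos₁ : 0 < c + a e + a f)
    (hB₂ : M.IsBase {g, h}) (hgh : g ≠ h) (hpos₂ : 0 < c + a g + a h) :
    c + a e + a f = c + a g + a h := by
  have hf := eq_of_isBase_pair_pos hnn hzero hB₁ hpos₁
  have hh := eq_of_isBase_pair_pos hnn hzero hB₂ hpos₂
  suffices a e = a g by linarith
  by_cases hg : g ∈ ({e, f} : Set α)
  · rcases hg with rfl | rfl <;> linarith
  obtain ⟨z, hz, -, hzB⟩ := hB₂.exists_isBase_pair hB₁ hgh hg
  have hz : a z = a e := by rcases hz with rfl | rfl <;> linarith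
  have := eq_of_isBase_pair_pos hnn hzero hzB (by linarith)
  linarith

end PairWeights

section FacetValues

variable [Fintype α] {ℓ : MvPolynomial α ℝ} {B₁ B₂ : Set α}

theorem eval_indicator_eq_zero_of_ncard_eq_one (hℓ : IsFacetDefining (baseConfig M) ℓ)
    (hvals : 2 < ((fun v => eval v ℓ) '' baseConfig M).ncard) (hB : M.IsBase B)
    (hB1 : B.ncard = 1) : eval (B.indicator 1) ℓ = 0 := by
  obtain ⟨e, rfl⟩ := ncard_eq_one.mp hB1
  obtain ⟨Z, hZ, heZ, hZ0⟩ := exists_isBase_mem_eval_eq_zero hℓ hvals hB (mem_singleton e)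
  obtain ⟨e', rfl⟩ := ncard_eq_one.mp ((hZ.ncard_eq_ncard_of_isBase hB).trans hB1)
  rwa [mem_singleton_iff.mp heZ]

theorem eval_indicator_eq_of_ncard_eq_two (hℓ : IsFacetDefining (baseConfig M) ℓ)
    (hvals : 2 < ((fun v => eval v ℓ) '' baseConfig M).ncard) (hB₁ : M.IsBase B₁)
    (hB₂ : M.IsBase B₂) (hB₁2 : B₁.ncard = 2) (hpos₁ : 0 < eval (B₁.indicator 1) ℓ)
    (hpos₂ : 0 < eval (B₂.indicator 1) ℓ) :
    eval (B₁.indicator 1) ℓ = eval (B₂.indicator 1) ℓ := by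
  set c := ℓ.coeff 0
  set a : α → ℝ := fun x => ℓ.coeff (Finsupp.single x 1)
  have hpair {x y : α} (hxy : x ≠ y) : eval (({x, y} : Set α).indicator 1) ℓ = c + a x + a y :=
    hℓ.1.eval_indicator_pair hxy
  have hnn (x y : α) (hxy : x ≠ y) (hB : M.IsBase {x, y}) : 0 ≤ c + a x + a y :=
    hpair hxy ▸ hℓ.2.1 _ ⟨_, hB, rfl⟩
  have hzero (x y : α) (hB : M.IsBase {x, y}) :
      ∃ x', x ≠ x' ∧ M.IsBase {x, x'} ∧ c + a x + a x' = 0 := by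
    obtain ⟨Z, hZ, hxZ, hZ0⟩ := exists_isBase_mem_eval_eq_zero hℓ hvals hB (mem_insert x {y})
    obtain ⟨x', hxx', rfl⟩ := exists_eq_pair_of_mem_of_ncard_eq_two
      ((hZ.ncard_eq_ncard_of_isBase hB₁).trans hB₁2) hxZ
    exact ⟨x', hxx', hZ, hpair hxx' ▸ hZ0⟩
  obtain ⟨e, f, hef, rfl⟩ := ncard_eq_two.mp hB₁2
  obtain ⟨g, h, hgh, rfl⟩ := ncard_eq_two.mp ((hB₂.ncard_eq_ncard_of_isBase hB₁).trans hB₁2)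
  rw [hpair hef] at hpos₁ ⊢
  rw [hpair hgh] at hpos₂ ⊢
  exact eq_of_isBase_pair_pos_of_isBase_pair_pos hnn hzero hB₁ hpos₁ hB₂ hgh hpos₂

theorem isKLevel_baseConfig_of_ncard_le_two (hr : ∀ B, M.IsBase B → B.ncard ≤ 2) :
    IsKLevel (baseConfig M) 2 := by
  intro ℓ hℓ
  by_contra! hvals
  refine hvals.not_ge (ncard_le_two_of_pos_eq ?_ ?_)
  · rintro _ ⟨v, hv, rfl⟩
    exact hℓ.2.1 v hv
  rintro _ ⟨_, ⟨B₁, hB₁, rfl⟩, rfl⟩ _ ⟨_, ⟨B₂, hB₂, rfl⟩, rfl⟩ hpos₁ hpos₂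
  have hcard := hB₂.ncard_eq_ncard_of_isBase hB₁
  obtain h0 | h1 | h2 : B₁.ncard = 0 ∨ B₁.ncard = 1 ∨ B₁.ncard = 2 := by
    have := hr B₁ hB₁; omega
  · rw [(ncard_eq_zero (s := B₁)).mp h0, (ncard_eq_zero (s := B₂)).mp (hcard.trans h0)]
  · exact absurd (eval_indicator_eq_zero_of_ncard_eq_one hℓ hvals hB₁ h1) hpos₁.ne'
  · exact eval_indicator_eq_of_ncard_eq_two hℓ hvals hB₁ hB₂ h2 hpos₁ hpos₂

end FacetValues

end Matroid

/-- A matroid on a finite ground set whose rank (the common cardinality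
of its bases) is at most `2`, or whose ground set has at most `5` elements, is 2-level. -/
theorem two_level_of_small_rank_or_ground {α : Type} [Fintype α] (M : Matroid α)
    (h : (∀ B, M.IsBase B → B.ncard ≤ 2) ∨ M.E.ncard ≤ 5) :
    levelness (baseConfig M) ≤ 2 := by
  refine IsKLevel.levelness_le ?_
  by_cases hr : ∀ B, M.IsBase B → B.ncard ≤ 2
  · exact M.isKLevel_baseConfig_of_ncard_le_two hr
  have hE : M.E.ncard ≤ 5 := h.resolve_left hr
  push Not at hr
  obtain ⟨B₀, hB₀, hB₀3⟩ := hr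
  have hr_dual (B : Set α) (hB : M✶.IsBase B) : B.ncard ≤ 2 := by
    have := hB₀.ncard_add_ncard_of_isBase_dual hB
    omega
  have := (M✶.isKLevel_baseConfig_of_ncard_le_two hr_dual).preimage_sub (M.E.indicator 1)
  rwa [M.baseConfig_dual, (const_sub_involutive _).preimage] at this
end
end

section
/- Let V ⊆ ℝ^d be a finite point configuration of Theta rank 1, i.e., Th(V) ≤ 1. Then the vanishing ideal I(V) ⊆ ℝ[x₁,…,x_d] admits a generating set consisting of polynomials of degree at most 2. -/
open MvPolynomial Set

noncomputable section

/-!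
Theta rank one means that every affine `ψ ≥ 0` on `V` is, on `V`, a sum of squares `∑ sᵢ²` of
affine functions, each vanishing where `ψ` does. If every `sᵢ` is proportional to `ψ` on `V`, then
`ψ = κ ψ²` on `V`, so `κ ψ` takes only the values `0` and `1`. Otherwise the extreme multiples with
`-t' ψ ≤ sᵢ ≤ t ψ` split `ψ = ((t ψ - sᵢ) + (t' ψ + sᵢ)) / (t + t')` into two nonnegative affine
functions with fewer nonzeros on `V`. By induction, every affine polynomial is a linear
combination of affine polynomials that are `0/1`-valued on `V`.

Modulo the quadrics vanishing on `V` these `0/1` polynomials become idempotents, so the minterms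
`e_T` of finitely many of them, chosen to span the coordinates, decompose `1`, and every
polynomial `f` acts on `e_T` as the scalar `f(w_T)`. If `e_T ≠ 0` then `w_T` is a zero of all
those quadrics, so every affine function that is nonnegative on `V` is nonnegative at `w_T` (its
sum-of-squares certificate is a quadric). Applied to the affine linearization of
`∑ (b - b(w_T))² - 1`, this forces `w_T` to share its `0/1` pattern with a point of `V`, hence to
be that point. So every `f ∈ I(V)` reduces to `∑ f(w_T) e_T = 0`.
-/

section Minterm

variable {ι A : Type*} [CommRing A]

open scoped Classical in
/-- For idempotent `p i` these are orthogonal idempotents summing to `1`: the atoms of the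
Boolean algebra generated by the `p i`. -/
def minterm (p : ι → A) (s T : Finset ι) : A :=
  (∏ i ∈ T, p i) * ∏ i ∈ s \ T, (1 - p i)

theorem sum_minterm (p : ι → A) (s : Finset ι) : ∑ T ∈ s.powerset, minterm p s T = 1 := by
  classical
  simp only [minterm]
  convert! (Finset.prod_add p (fun i => 1 - p i) s).symm
  simp

variable {p : ι → A} {s T : Finset ι} {i : ι}

theorem mul_minterm_of_mem (hp : IsIdempotentElem (p i)) (hiT : i ∈ T) :
    p i * minterm p s T = minterm p s T := by
  classical
  rw [minterm, ← Finset.mul_prod_erase T p hiT, ← mul_assoc, ← mul_assoc, hp.eq]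

theorem mul_minterm_of_notMem (hp : IsIdempotentElem (p i)) (hi : i ∈ s) (hiT : i ∉ T) :
    p i * minterm p s T = 0 := by
  classical
  have hi' : i ∈ s \ T := Finset.mem_sdiff.2 ⟨hi, hiT⟩
  have h0 : p i * (1 - p i) = 0 := by rw [mul_sub, mul_one, hp.eq, sub_self]
  rw [minterm, ← Finset.mul_prod_erase _ _ hi', mul_left_comm, ← mul_assoc (p i), h0, zero_mul,
    mul_zero]

end Minterm

namespace MvPolynomial

variable {σ R A : Type*} [CommRing R] [CommRing A] [Algebra R A]

theorem exists_eval_smul_of_X_mul_mem_span (φ : MvPolynomial σ R →ₐ[R] A) (e : A)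
    (h : ∀ j, φ (X j) * e ∈ R ∙ e) : ∃ w : σ → R, ∀ f, φ f * e = eval w f • e := by
  choose w hw using fun j => Submodule.mem_span_singleton.mp (h j)
  refine ⟨w, fun f => ?_⟩
  induction f using MvPolynomial.induction_on with
  | C a => rw [eval_C, Algebra.smul_def, ← φ.commutes]; rfl
  | add p q hp hq => rw [map_add, add_mul, hp, hq, map_add, add_smul]
  | mul_X p j hp =>
    rw [map_mul, mul_assoc, ← hw j, mul_smul_comm, hp, smul_smul, eval_mul, eval_X, mul_comm]

theorem exists_eval_smul_minterm (φ : MvPolynomial σ R →ₐ[R] A) {B : Finset (MvPolynomial σ R)}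
    (hB : ∀ b ∈ B, IsIdempotentElem (φ b))
    (hX : ∀ j, X j ∈ Submodule.span R (B : Set (MvPolynomial σ R)))
    (T : Finset (MvPolynomial σ R)) :
    ∃ w : σ → R, ∀ f, φ f * minterm (φ ·) B T = eval w f • minterm (φ ·) B T := by
  refine exists_eval_smul_of_X_mul_mem_span φ _ fun j => ?_
  have hspan : Submodule.span R (B : Set (MvPolynomial σ R)) ≤
      (R ∙ minterm (φ ·) B T).comap
        (LinearMap.mulRight R (minterm (φ ·) B T) ∘ₗ φ.toLinearMap) := by
    rw [Submodule.span_le]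
    intro b hb
    simp only [SetLike.mem_coe, Submodule.mem_comap, LinearMap.coe_comp, Function.comp_apply,
      AlgHom.toLinearMap_apply, LinearMap.mulRight_apply]
    by_cases hbT : b ∈ T
    · rw [mul_minterm_of_mem (hB b hb) hbT]
      exact Submodule.mem_span_singleton_self _
    · rw [mul_minterm_of_notMem (hB b hb) hb hbT]
      exact Submodule.zero_mem _
  exact hspan (hX j)

end MvPolynomial

theorem Set.Finite.exists_le_mul_eq_mul {α : Type*} {s : Set α} (hs : s.Finite) {f g : α → ℝ}
    (hf : ∀ x ∈ s, 0 ≤ f x) (hg : ∀ x ∈ s, f x = 0 → g x = 0) (hne : ∃ x ∈ s, f x ≠ 0) :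
    ∃ t, (∀ x ∈ s, g x ≤ t * f x) ∧ ∃ x ∈ s, f x ≠ 0 ∧ g x = t * f x := by
  obtain ⟨x, ⟨hxs, hfx⟩, hmax⟩ :=
    Set.exists_max_image {x ∈ s | f x ≠ 0} (fun x => g x / f x) (hs.subset (sep_subset _ _)) hne
  refine ⟨g x / f x, fun y hy => ?_, x, hxs, hfx, (div_mul_cancel₀ _ hfx).symm⟩
  by_cases hfy : f y = 0
  · simp [hfy, hg y hy hfy]
  · have hpos : 0 < f y := (hf y hy).lt_of_ne' hfy
    exact (div_le_iff₀ hpos).mp (hmax y ⟨hy, hfy⟩)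

section ThetaRank

variable {ι : Type} {V : Set (ι → ℝ)} {k : ℕ} {ℓ : MvPolynomial ι ℝ}

def IsThetaExact (V : Set (ι → ℝ)) (k : ℕ) : Prop :=
  ∀ ℓ, IsAffLin ℓ → NonnegOn V ℓ → IsKSos V k ℓ

theorem IsKSos.mono {k' : ℕ} (h : IsKSos V k ℓ) (hk : k ≤ k') : IsKSos V k' ℓ :=
  let ⟨s, g, hdeg, heq⟩ := h
  ⟨s, g, fun i => (hdeg i).trans hk, heq⟩

theorem isKSos_of_eq_sum_sq {α : Type*} (F : Finset α) (g : α → MvPolynomial ι ℝ)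
    (hdeg : ∀ x ∈ F, (g x).totalDegree ≤ k) (h : ∀ v ∈ V, eval v ℓ = ∑ x ∈ F, eval v (g x) ^ 2) :
    IsKSos V k ℓ := by
  refine ⟨F.card, fun i => g (F.equivFin.symm i), fun i => hdeg _ (F.equivFin.symm i).2,
    fun v hv => ?_⟩
  rw [h v hv, ← Finset.sum_coe_sort F, ← Equiv.sum_comp F.equivFin.symm]

theorem Set.Finite.exists_eval_eq_indicator (hV : V.Finite) (v : ι → ℝ) :
    ∃ δ : MvPolynomial ι ℝ, eval v δ = 1 ∧ ∀ w ∈ V, w ≠ v → eval w δ = 0 := by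
  have hsep : ∀ w, ∃ p : MvPolynomial ι ℝ, w ≠ v → eval v p = 1 ∧ eval w p = 0 := by
    intro w
    by_cases hw : w = v
    · exact ⟨0, fun h => (h hw).elim⟩
    obtain ⟨j, hj⟩ := Function.ne_iff.mp hw
    refine ⟨C (v j - w j)⁻¹ * (X j - C (w j)), fun _ => ⟨?_, by simp⟩⟩
    simp [inv_mul_cancel₀ (sub_ne_zero.mpr hj.symm)]
  choose p hp using hsep
  classical
  refine ⟨∏ w ∈ hV.toFinset.erase v, p w, ?_, fun w hw hwv => ?_⟩
  · rw [map_prod]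
    exact Finset.prod_eq_one fun w hw => (hp w (Finset.ne_of_mem_erase hw)).1
  · rw [map_prod]
    exact Finset.prod_eq_zero (Finset.mem_erase.mpr ⟨hwv, hV.mem_toFinset.mpr hw⟩) (hp w hwv).2

theorem Set.Finite.exists_forall_isKSos (hV : V.Finite) :
    ∃ k, ∀ ℓ, NonnegOn V ℓ → IsKSos V k ℓ := by
  choose δ hδv hδw using hV.exists_eval_eq_indicator
  refine ⟨hV.toFinset.sup fun v => (δ v).totalDegree, fun ℓ hℓ => ?_⟩
  -- `ℓ = ∑_{x ∈ V} (√(ℓ x) δ_x)²` on `V`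
  refine isKSos_of_eq_sum_sq hV.toFinset (fun x => √(eval x ℓ) • δ x)
    (fun x hx => (totalDegree_smul_le _ _).trans
      (Finset.le_sup (f := fun v => (δ v).totalDegree) hx))
    fun v hv => ?_
  rw [Finset.sum_eq_single_of_mem v (hV.mem_toFinset.mpr hv) fun x _ hxv => by
    rw [smul_eval, hδw x v hv hxv.symm, mul_zero, sq, mul_zero]]
  rw [smul_eval, hδv, mul_one, Real.sq_sqrt (hℓ v hv)]

theorem isThetaExact_of_thetaRank_le (hV : V.Finite) (hTh : thetaRank V ≤ k) :
    IsThetaExact V k := fun ℓ hℓ hnn => by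
  obtain ⟨k₀, hk₀⟩ := hV.exists_forall_isKSos
  exact (Nat.sInf_mem (s := {k | IsThetaExact V k}) ⟨k₀, fun ℓ _ => hk₀ ℓ⟩ ℓ hℓ hnn).mono hTh

end ThetaRank

section ZeroOne

variable {ι : Type} {V : Set (ι → ℝ)} {f g ψ : MvPolynomial ι ℝ}

theorem isAffLin_C (a : ℝ) : IsAffLin (C a : MvPolynomial ι ℝ) := by simp [IsAffLin]

theorem isAffLin_X (j : ι) : IsAffLin (X j : MvPolynomial ι ℝ) := (totalDegree_X j).le

theorem IsAffLin.add (hf : IsAffLin f) (hg : IsAffLin g) : IsAffLin (f + g) :=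
  (totalDegree_add f g).trans (max_le hf hg)

theorem IsAffLin.sub (hf : IsAffLin f) (hg : IsAffLin g) : IsAffLin (f - g) :=
  (totalDegree_sub f g).trans (max_le hf hg)

theorem IsAffLin.smul (a : ℝ) (hf : IsAffLin f) : IsAffLin (a • f) :=
  (totalDegree_smul_le a f).trans hf

theorem IsAffLin.totalDegree_mul_le (hf : IsAffLin f) (hg : IsAffLin g) :
    (f * g).totalDegree ≤ 2 :=
  (totalDegree_mul f g).trans (add_le_add hf hg)

def IsAffineZeroOne (V : Set (ι → ℝ)) (b : MvPolynomial ι ℝ) : Prop :=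
  IsAffLin b ∧ ∀ v ∈ V, eval v b = 0 ∨ eval v b = 1

theorem IsAffineZeroOne.totalDegree_mul_self_sub_le {b : MvPolynomial ι ℝ}
    (hb : IsAffineZeroOne V b) : (b * b - b).totalDegree ≤ 2 :=
  (totalDegree_sub _ _).trans (max_le (hb.1.totalDegree_mul_le hb.1) (hb.1.trans one_le_two))

theorem IsAffineZeroOne.eval_mul_self_sub {b : MvPolynomial ι ℝ} (hb : IsAffineZeroOne V b)
    {v : ι → ℝ} (hv : v ∈ V) : eval v (b * b - b) = 0 := by
  rcases hb.2 v hv with h | h <;> simp [h]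

def zeroOneSpan (V : Set (ι → ℝ)) : Submodule ℝ (MvPolynomial ι ℝ) :=
  Submodule.span ℝ {b | IsAffineZeroOne V b}

theorem ncard_support_lt (hV : V.Finite) (hg : ∀ v ∈ V, eval v f = 0 → eval v g = 0) {x : ι → ℝ}
    (hx : x ∈ V) (hfx : eval x f ≠ 0) (hgx : eval x g = 0) :
    {v ∈ V | eval v g ≠ 0}.ncard < {v ∈ V | eval v f ≠ 0}.ncard := by
  refine Set.ncard_lt_ncard ((Set.ssubset_iff_of_subset fun v hv => ?_).mpr ⟨x, ⟨hx, hfx⟩, ?_⟩)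
    (hV.subset (sep_subset _ _))
  · exact ⟨hv.1, fun hfv => hv.2 (hg v hv.1 hfv)⟩
  · exact fun h => h.2 hgx

theorem mem_zeroOneSpan_of_eq_mul_sq (hψ : IsAffLin ψ) {κ : ℝ}
    (h : ∀ v ∈ V, eval v ψ = κ * eval v ψ ^ 2) : ψ ∈ zeroOneSpan V := by
  have hκψ : IsAffineZeroOne V (κ • ψ) := by
    refine ⟨hψ.smul κ, fun v hv => ?_⟩
    have : κ * eval v ψ * (κ * eval v ψ - 1) = 0 := by linear_combination (-κ) * h v hv
    rw [smul_eval]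
    exact (mul_eq_zero.mp this).imp_right sub_eq_zero.mp
  by_cases hκ : κ = 0
  · exact Submodule.subset_span ⟨hψ, fun v hv => Or.inl (by simpa [hκ] using h v hv)⟩
  · rw [← inv_smul_smul₀ hκ ψ]
    exact Submodule.smul_mem _ _ (Submodule.subset_span hκψ)

theorem mem_zeroOneSpan_of_not_proportional (hV : V.Finite)
    (IH : ∀ a, IsAffLin a → NonnegOn V a →
      {v ∈ V | eval v a ≠ 0}.ncard < {v ∈ V | eval v ψ ≠ 0}.ncard → a ∈ zeroOneSpan V)
    (hψ : IsAffLin ψ) (hnn : NonnegOn V ψ) (hf : IsAffLin f)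
    (hf0 : ∀ v ∈ V, eval v ψ = 0 → eval v f = 0)
    (hprop : ¬ ∃ c, ∀ v ∈ V, eval v f = c * eval v ψ) : ψ ∈ zeroOneSpan V := by
  have hne : ∃ x ∈ V, eval x ψ ≠ 0 := by
    by_contra! h
    exact hprop ⟨0, fun v hv => by simp [h v hv, hf0 v hv (h v hv)]⟩
  obtain ⟨t, hle, x, hx, hψx, hfx⟩ := hV.exists_le_mul_eq_mul hnn hf0 hne
  obtain ⟨t', hle', x', hx', hψx', hfx'⟩ := hV.exists_le_mul_eq_mul hnn (g := fun v => -eval v f)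
    (fun v hv h => by simp [hf0 v hv h]) hne
  have ht : 0 < t + t' := by
    by_contra! ht
    refine hprop ⟨t, fun v hv => ?_⟩
    have := hle v hv
    have := hle' v hv
    nlinarith [hnn v hv]
  have hsplit : ψ = (t + t')⁻¹ • ((t • ψ - f) + (t' • ψ + f)) := by
    rw [show (t • ψ - f) + (t' • ψ + f) = (t + t') • ψ by rw [add_smul]; abel,
      inv_smul_smul₀ ht.ne']
  -- both summands are nonnegative on `V` and vanish at a point where `ψ` does not
  rw [hsplit]
  refine Submodule.smul_mem _ _ (Submodule.add_mem _ (IH _ ((hψ.smul t).sub hf) ?_ ?_)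
    (IH _ ((hψ.smul t').add hf) ?_ ?_))
  · intro v hv
    simp only [map_sub, smul_eval]
    linarith [hle v hv]
  · exact ncard_support_lt hV (fun v hv h => by simp [h, hf0 v hv h]) hx hψx
      (by simp only [map_sub, smul_eval]; linarith)
  · intro v hv
    simp only [map_add, smul_eval]
    linarith [hle' v hv]
  · exact ncard_support_lt hV (fun v hv h => by simp [h, hf0 v hv h]) hx' hψx'
      (by simp only [map_add, smul_eval]; linarith)

variable (hsos : IsThetaExact V 1)
include hsos

theorem mem_zeroOneSpan_of_nonnegOn (hV : V.Finite) (hψ : IsAffLin ψ) (hnn : NonnegOn V ψ) :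
    ψ ∈ zeroOneSpan V := by
  induction hn : {v ∈ V | eval v ψ ≠ 0}.ncard using Nat.strong_induction_on generalizing ψ with
  | _ n IH =>
  obtain ⟨m, h, hdeg, hsum⟩ := hsos ψ hψ hnn
  have hvanish : ∀ i, ∀ v ∈ V, eval v ψ = 0 → eval v (h i) = 0 := fun i v hv hψv => by
    have := (Finset.sum_eq_zero_iff_of_nonneg fun i _ => sq_nonneg (eval v (h i))).mp
      ((hsum v hv).symm.trans hψv) i (Finset.mem_univ i)
    exact pow_eq_zero_iff two_ne_zero |>.mp this
  by_cases hprop : ∀ i, ∃ c, ∀ v ∈ V, eval v (h i) = c * eval v ψ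
  · choose c hc using hprop
    refine mem_zeroOneSpan_of_eq_mul_sq hψ (κ := ∑ i, c i ^ 2) fun v hv => ?_
    calc eval v ψ = ∑ i, eval v (h i) ^ 2 := hsum v hv
      _ = ∑ i, c i ^ 2 * eval v ψ ^ 2 :=
        Finset.sum_congr rfl fun i _ => by rw [hc i v hv, mul_pow]
      _ = (∑ i, c i ^ 2) * eval v ψ ^ 2 := (Finset.sum_mul ..).symm
  · obtain ⟨i, hi⟩ := not_forall.mp hprop
    exact mem_zeroOneSpan_of_not_proportional hV
      (fun a ha hna hlt => IH _ (hn ▸ hlt) ha hna rfl) hψ hnn (hdeg i) (hvanish i) hi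

theorem mem_zeroOneSpan_of_isAffLin (hV : V.Finite) (hf : IsAffLin f) : f ∈ zeroOneSpan V := by
  obtain ⟨m, hm⟩ := (hV.image fun v => eval v f).bddBelow
  have hone : IsAffineZeroOne V 1 := ⟨by simp [IsAffLin], fun _ _ => Or.inr (map_one _)⟩
  rw [show f = (f - C m) + m • 1 by rw [smul_eq_C_mul, mul_one, sub_add_cancel]]
  refine Submodule.add_mem _ (mem_zeroOneSpan_of_nonnegOn hsos hV (hf.sub (isAffLin_C m))
    fun v hv => ?_) (Submodule.smul_mem _ _ (Submodule.subset_span hone))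
  simpa using hm (Set.mem_image_of_mem _ hv)

theorem exists_finset_isAffineZeroOne_X_mem_span [Fintype ι] (hV : V.Finite) :
    ∃ B : Finset (MvPolynomial ι ℝ), (∀ b ∈ B, IsAffineZeroOne V b) ∧
      ∀ j, X j ∈ Submodule.span ℝ (B : Set (MvPolynomial ι ℝ)) := by
  classical
  choose T hT hXT using fun j =>
    Submodule.mem_span_finite_of_mem_span (mem_zeroOneSpan_of_isAffLin hsos hV (isAffLin_X j))
  refine ⟨Finset.univ.biUnion T, fun b hb => ?_, fun j => Submodule.span_mono ?_ (hXT j)⟩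
  · obtain ⟨j, -, hbj⟩ := Finset.mem_biUnion.mp hb
    exact hT j hbj
  · exact_mod_cast Finset.subset_biUnion_of_mem T (Finset.mem_univ j)

end ZeroOne

section QuadricZeros

variable {ι : Type} {V : Set (ι → ℝ)} {w : ι → ℝ}
  (hw : ∀ q : MvPolynomial ι ℝ, q.totalDegree ≤ 2 → (∀ v ∈ V, eval v q = 0) → eval w q = 0)
include hw

theorem eval_nonneg_of_forall_quadric (hsos : IsThetaExact V 1)
    {ℓ : MvPolynomial ι ℝ} (hℓ : IsAffLin ℓ) (hnn : NonnegOn V ℓ) : 0 ≤ eval w ℓ := by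
  obtain ⟨n, h, hdeg, hsum⟩ := hsos ℓ hℓ hnn
  have hdeg2 : (ℓ - ∑ i, h i ^ 2).totalDegree ≤ 2 := by
    refine (totalDegree_sub _ _).trans (max_le (hℓ.trans one_le_two) ?_)
    refine (totalDegree_finsetSum _ _).trans (Finset.sup_le fun i _ => ?_)
    exact sq (h i) ▸ IsAffLin.totalDegree_mul_le (hdeg i) (hdeg i)
  have := hw _ hdeg2 fun v hv => by simp [hsum v hv]
  rw [map_sub, sub_eq_zero, map_sum] at this
  rw [this]
  exact Finset.sum_nonneg fun i _ => by rw [map_pow]; exact sq_nonneg _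

theorem eval_eq_zero_or_one_of_forall_quadric {b : MvPolynomial ι ℝ} (hb : IsAffineZeroOne V b) :
    eval w b = 0 ∨ eval w b = 1 := by
  have := hw _ hb.totalDegree_mul_self_sub_le fun v hv => hb.eval_mul_self_sub hv
  have : eval w b * (eval w b - 1) = 0 := by rw [← this, map_sub, map_mul]; ring
  exact (mul_eq_zero.mp this).imp_right sub_eq_zero.mp

theorem exists_mem_eval_eq_of_forall_quadric
    (hsos : IsThetaExact V 1) {B : Finset (MvPolynomial ι ℝ)}
    (hB : ∀ b ∈ B, IsAffineZeroOne V b) : ∃ v ∈ V, ∀ b ∈ B, eval v b = eval w b := by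
  have hwB := fun b hb => eval_eq_zero_or_one_of_forall_quadric hw (hB b hb)
  -- the linearization of `∑ b, (b - b w)²` by `b² = b`
  set g : MvPolynomial ι ℝ := ∑ b ∈ B, (C (eval w b) + (1 - 2 * eval w b) • b)
  have hg : ∀ x, (∀ b ∈ B, eval x b = 0 ∨ eval x b = 1) →
      eval x g = ∑ b ∈ B, (eval x b - eval w b) ^ 2 := fun x hx => by
    simp only [g, map_sum, map_add, eval_C, smul_eval]
    refine Finset.sum_congr rfl fun b hb => ?_
    rcases hx b hb with h | h <;> rcases hwB b hb with h' | h' <;> norm_num [h, h']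
  by_contra! hsep
  have hge : NonnegOn V (g - C 1) := fun v hv => by
    obtain ⟨b, hb, hvb⟩ := hsep v hv
    have hterm : (eval v b - eval w b) ^ 2 = 1 := by
      rcases (hB b hb).2 v hv with h | h <;> rcases hwB b hb with h' | h' <;>
        simp_all
    have := Finset.single_le_sum (f := fun b => (eval v b - eval w b) ^ 2)
      (fun b _ => sq_nonneg _) hb
    rw [map_sub, eval_C, hg v fun b hb => (hB b hb).2 v hv]
    linarith
  have hgAff : IsAffLin g := by
    refine (totalDegree_finsetSum _ _).trans (Finset.sup_le fun b hb => ?_)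
    exact (isAffLin_C _).add ((hB b hb).1.smul _)
  have := eval_nonneg_of_forall_quadric hw hsos (hgAff.sub (isAffLin_C 1)) hge
  norm_num [hg w hwB] at this

theorem mem_of_forall_quadric (hsos : IsThetaExact V 1)
    {B : Finset (MvPolynomial ι ℝ)} (hB : ∀ b ∈ B, IsAffineZeroOne V b)
    (hX : ∀ j, X j ∈ Submodule.span ℝ (B : Set (MvPolynomial ι ℝ))) : w ∈ V := by
  obtain ⟨v, hv, hvw⟩ := exists_mem_eval_eq_of_forall_quadric hw hsos hB
  have hvw' : v = w := funext fun j => by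
    simpa using LinearMap.eqOn_span' (f := (aeval v).toLinearMap) (g := (aeval w).toLinearMap)
      (fun b hb => hvw b hb) (hX j)
  exact hvw' ▸ hv

end QuadricZeros

theorem vanishingIdeal_le_span_quadrics {ι : Type} {V : Set (ι → ℝ)}
    (hsos : IsThetaExact V 1) {B : Finset (MvPolynomial ι ℝ)}
    (hB : ∀ b ∈ B, IsAffineZeroOne V b)
    (hX : ∀ j, X j ∈ Submodule.span ℝ (B : Set (MvPolynomial ι ℝ))) :
    vanishingIdeal ℝ V ≤ Ideal.span {q | q.totalDegree ≤ 2 ∧ ∀ v ∈ V, eval v q = 0} := by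
  set J := Ideal.span {q : MvPolynomial ι ℝ | q.totalDegree ≤ 2 ∧ ∀ v ∈ V, eval v q = 0}
  set π := Ideal.Quotient.mkₐ ℝ J
  have hπ : ∀ q, q.totalDegree ≤ 2 → (∀ v ∈ V, eval v q = 0) → π q = 0 := fun q h1 h2 =>
    Ideal.Quotient.eq_zero_iff_mem.mpr (Ideal.subset_span ⟨h1, h2⟩)
  have hidem : ∀ b ∈ B, IsIdempotentElem (π b) := fun b hb => by
    rw [IsIdempotentElem, ← map_mul, ← sub_eq_zero, ← map_sub]
    exact hπ _ (hB b hb).totalDegree_mul_self_sub_le fun v hv => (hB b hb).eval_mul_self_sub hv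
  intro f hf
  rw [← Ideal.Quotient.eq_zero_iff_mem, ← Ideal.Quotient.mkₐ_eq_mk ℝ, ← mul_one (π f),
    ← sum_minterm (π ·) B, Finset.mul_sum]
  refine Finset.sum_eq_zero fun T _ => ?_
  obtain ⟨w, hw⟩ := exists_eval_smul_minterm π hidem hX T
  by_cases he : minterm (π ·) B T = 0
  · rw [he, mul_zero]
  have hwV : w ∈ V := mem_of_forall_quadric (fun q h1 h2 => by
    have := hw q
    rw [hπ q h1 h2, zero_mul, eq_comm, smul_eq_zero] at this
    exact this.resolve_right he) hsos hB hX
  rw [hw f, show eval w f = 0 from hf w hwV, zero_smul]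

/-- If a finite point configuration `V ⊆ ℝ^d` has Theta rank `1`, then
its vanishing ideal admits a generating set consisting of polynomials of degree at
most `2`. -/
theorem vanishingIdeal_generated_in_degree_two_of_theta_one {d : ℕ}
    (V : Set (Fin d → ℝ)) (hVfin : V.Finite) (hTh : thetaRank V ≤ 1) :
    ∃ G : Set (MvPolynomial (Fin d) ℝ),
      (∀ g ∈ G, g.totalDegree ≤ 2) ∧ Ideal.span G = MvPolynomial.vanishingIdeal ℝ V := by
  refine ⟨{q | q.totalDegree ≤ 2 ∧ ∀ v ∈ V, eval v q = 0}, fun q hq => hq.1, le_antisymm ?_ ?_⟩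
  · exact Ideal.span_le.mpr fun q hq => mem_vanishingIdeal_iff.mpr hq.2
  · have hsos := isThetaExact_of_thetaRank_le hVfin hTh
    obtain ⟨B, hB, hX⟩ := exists_finset_isAffineZeroOne_X_mem_span hsos hVfin
    exact vanishingIdeal_le_span_quadrics hsos hB hX
end
end
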